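/- Let E be a complex Banach space, take p,q with 1 < p ≤ q < ∞, and let (Ω,μ) be a measure space such that L^p(Ω) is infinite-dimensional. Let j : L^p(Ω) → L^p(Ω)'' denote the canonical embedding, which is an isometric isomorphism since L^p(Ω) is reflexive for 1 < p < ∞. Then for every n ∈ ℕ and Φ₁,…,Φₙ ∈ E'', sup{(Σᵢ₌₁ⁿ |Φᵢ(λᵢ)|^q)^{1/q} : (λ₁,…,λₙ) ∈ (E')ⁿ, μ_{p,n}(λ) ≤ 1} = sup{‖(j⁻¹(T''Φ₁),…,j⁻¹(T''Φₙ))‖ₙ^{[q]} : T ∈ B(E, L^p(Ω)), ‖T‖ ≤ 1}, where T'' : E'' → L^p(Ω)'' is the second adjoint of T. (The left-hand side is the (p,q)-multi-norm of (Φ₁,…,Φₙ) in E''.) -/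

import Mathlib

open MeasureTheory NormedSpace
open scoped ENNReal

variable {E : Type*} [NormedAddCommGroup E] [NormedSpace ℂ E]

/-- The weak `p`-summing norm `μ_{p,n}` of a tuple of functionals on `E`,
computed over the unit ball of `E`. -/
noncomputable def muPN (p : ℝ) {n : ℕ} (lam : Fin n → StrongDual ℂ E) : ℝ :=
  sSup {r : ℝ | ∃ x : E, ‖x‖ ≤ 1 ∧ r = (∑ i, ‖lam i x‖ ^ p) ^ (1 / p)}

/-- The standard `q`-multi-norm of a tuple in `L^p(Ω)`: the supremum over measurable
partitions `{X₁,…,Xₙ}` of `Ω` of `(Σᵢ ‖χ_{Xᵢ} gᵢ‖_p^q)^{1/q}`. -/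
noncomputable def stdQNorm {α : Type*} [MeasurableSpace α] (μ : Measure α)
    (pe : ℝ≥0∞) (q : ℝ) {n : ℕ} (g : Fin n → Lp ℂ pe μ) : ℝ :=
  sSup {r : ℝ | ∃ X : Fin n → Set α,
    (∀ i, MeasurableSet (X i)) ∧ Pairwise (Function.onFun Disjoint X) ∧
    (⋃ i, X i) = Set.univ ∧
    r = (∑ i, (eLpNorm (g i) pe (μ.restrict (X i))).toReal ^ q) ^ (1 / q)}

/-- The adjoint `T' : F' → E'` of a bounded operator `T : E → F`. -/
noncomputable def dualOp {F : Type*} [NormedAddCommGroup F] [NormedSpace ℂ F]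
    (T : E →L[ℂ] F) : StrongDual ℂ F →L[ℂ] StrongDual ℂ E :=
  (ContinuousLinearMap.compL ℂ E F ℂ).flip T

/-!
Both suprema are compared through explicit witnesses.

Given `λ` with `μ_{p,n}(λ) ≤ 1`, take disjoint sets `X₁, …, Xₙ` of finite positive measure and
the normalized indicators `eᵢ = χ_{Xᵢ} / μ(Xᵢ)^{1/p}`. As `c ↦ Σ cᵢ eᵢ` is an isometry of
`ℓᵖₙ` into `Lᵖ`, the operator `T = Σ λᵢ ⊗ eᵢ` is a contraction, `T''Φₖ = j (Σᵢ Φₖ(λᵢ) eᵢ)`,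
and the restriction of this function to `Xₖ` has norm `|Φₖ(λₖ)|`.

Conversely, given a contraction `T` with `T''Φᵢ = j gᵢ` and a partition `(Xᵢ)`, let `ψᵢ` be a
norming functional of `χ_{Xᵢ} gᵢ` and `λᵢ = T'(ψᵢ ∘ χ_{Xᵢ})`. Then `Φᵢ(λᵢ) = ‖χ_{Xᵢ} gᵢ‖_p`,
and `μ_{p,n}(λ) ≤ 1` because `Σᵢ ‖χ_{Xᵢ} f‖_pᵖ ≤ ‖f‖_pᵖ` for disjoint `Xᵢ`.
-/

theorem sum_rpow_rpow_one_div_le_of_le {ι : Type*} [Fintype ι] {q : ℝ} (hq : 0 < q)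
    {a b : ι → ℝ} (ha : ∀ i, 0 ≤ a i) (hab : ∀ i, a i ≤ b i) :
    (∑ i, a i ^ q) ^ (1 / q) ≤ (∑ i, b i ^ q) ^ (1 / q) := by
  gcongr with i
  · exact Finset.sum_nonneg fun i _ => Real.rpow_nonneg (ha i) q
  · exact ha i
  · exact hab i

theorem le_sum_rpow_rpow_one_div {ι : Type*} [Fintype ι] {p : ℝ} (hp : 0 < p) {a : ι → ℝ}
    (ha : ∀ i, 0 ≤ a i) (k : ι) : a k ≤ (∑ i, a i ^ p) ^ (1 / p) :=
  calc a k = (a k ^ p) ^ (1 / p) := by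
        rw [← Real.rpow_mul (ha k), mul_one_div_cancel hp.ne', Real.rpow_one]
    _ ≤ (∑ i, a i ^ p) ^ (1 / p) :=
        Real.rpow_le_rpow (Real.rpow_nonneg (ha k) p)
          (Finset.single_le_sum (fun i _ => Real.rpow_nonneg (ha i) p) (Finset.mem_univ k))
          (by positivity)

theorem pos_of_one_le_ofReal (p : ℝ) [Fact (1 ≤ ENNReal.ofReal p)] : 0 < p :=
  zero_lt_one.trans_le (ENNReal.one_le_ofReal.1 Fact.out)

section DualOp

variable {F : Type*} [NormedAddCommGroup F] [NormedSpace ℂ F]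

theorem dualOp_apply (T : E →L[ℂ] F) (h : StrongDual ℂ F) : dualOp T h = h.comp T := rfl

theorem norm_dualOp_le (T : E →L[ℂ] F) : ‖dualOp T‖ ≤ ‖T‖ :=
  (dualOp T).opNorm_le_bound (norm_nonneg T) fun h => (h.opNorm_comp_le T).trans_eq (mul_comm _ _)

theorem comp_dualOp_sum_smulRight {ι : Type*} [Fintype ι] (Φ : StrongDual ℂ (StrongDual ℂ E))
    (lam : ι → StrongDual ℂ E) (e : ι → F) :
    Φ.comp (dualOp (∑ i, (lam i).smulRight (e i)))
      = inclusionInDoubleDual ℂ F (∑ i, Φ (lam i) • e i) := by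
  ext h
  have hcomp : h.comp (∑ i, (lam i).smulRight (e i)) = ∑ i, h (e i) • lam i := by
    ext x
    simp [mul_comm]
  simp [dualOp_apply, hcomp, mul_comm]

theorem norm_le_of_inclusionInDoubleDual_eq_comp_dualOp {T : E →L[ℂ] F} (hT : ‖T‖ ≤ 1)
    {Φ : StrongDual ℂ (StrongDual ℂ E)} {g : F}
    (hg : inclusionInDoubleDual ℂ F g = Φ.comp (dualOp T)) : ‖g‖ ≤ ‖Φ‖ :=
  calc ‖g‖ = ‖Φ.comp (dualOp T)‖ := by
        rw [← hg]; exact ((inclusionInDoubleDualLi ℂ).norm_map g).symm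
    _ ≤ ‖Φ‖ * ‖dualOp T‖ := Φ.opNorm_comp_le _
    _ ≤ ‖Φ‖ := mul_le_of_le_one_right (norm_nonneg Φ) ((norm_dualOp_le T).trans hT)

end DualOp

section MuPN

variable {p : ℝ} {n : ℕ}

theorem muPN_bddAbove (hp : 0 < p) (lam : Fin n → StrongDual ℂ E) :
    BddAbove {r : ℝ | ∃ x : E, ‖x‖ ≤ 1 ∧ r = (∑ i, ‖lam i x‖ ^ p) ^ (1 / p)} := by
  refine ⟨(∑ i, ‖lam i‖ ^ p) ^ (1 / p), ?_⟩
  rintro _ ⟨x, hx, rfl⟩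
  exact sum_rpow_rpow_one_div_le_of_le hp (fun i => norm_nonneg _)
    fun i => (lam i).le_of_opNorm_le_of_le le_rfl hx |>.trans_eq (mul_one _)

theorem le_muPN (hp : 0 < p) (lam : Fin n → StrongDual ℂ E) {x : E} (hx : ‖x‖ ≤ 1) :
    (∑ i, ‖lam i x‖ ^ p) ^ (1 / p) ≤ muPN p lam :=
  le_csSup (muPN_bddAbove hp lam) ⟨x, hx, rfl⟩

theorem muPN_nonneg (lam : Fin n → StrongDual ℂ E) : 0 ≤ muPN p lam :=
  Real.sSup_nonneg fun _ ⟨x, _, hr⟩ => hr ▸ by positivity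

theorem norm_le_muPN (hp : 0 < p) (lam : Fin n → StrongDual ℂ E) (i : Fin n) :
    ‖lam i‖ ≤ muPN p lam :=
  ContinuousLinearMap.opNorm_le_of_unit_norm (muPN_nonneg lam) fun x hx =>
    (le_sum_rpow_rpow_one_div hp (fun j => norm_nonneg (lam j x)) i).trans (le_muPN hp lam hx.le)

theorem muPN_le_one (hp : 0 < p) {lam : Fin n → StrongDual ℂ E}
    (h : ∀ x : E, ‖x‖ ≤ 1 → ∑ i, ‖lam i x‖ ^ p ≤ 1) : muPN p lam ≤ 1 :=
  Real.sSup_le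
    (fun _ ⟨x, hx, hr⟩ => hr ▸ Real.rpow_le_one (by positivity) (h x hx) (by positivity))
    zero_le_one

end MuPN

section StdQNorm

variable {α : Type*} [MeasurableSpace α] {μ : Measure α} {pe : ℝ≥0∞} {q : ℝ} {n : ℕ}

theorem exists_partition_superset {ι : Type*} [Countable ι] [Nonempty ι] {X : ι → Set α}
    (hX : ∀ i, MeasurableSet (X i)) (hd : Pairwise (Function.onFun Disjoint X)) :
    ∃ Y : ι → Set α, (∀ i, MeasurableSet (Y i)) ∧ Pairwise (Function.onFun Disjoint Y) ∧
      (⋃ i, Y i) = Set.univ ∧ ∀ i, X i ⊆ Y i := by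
  obtain ⟨i₀⟩ := ‹Nonempty ι›
  set Z := ⋃ j, X j
  refine ⟨fun i => X i ∪ {x | i = i₀ ∧ x ∉ Z}, fun i => ?_, fun i j hij => ?_, ?_,
    fun i => Set.subset_union_left⟩
  · exact (hX i).union ((MeasurableSet.const _).inter (MeasurableSet.iUnion hX).compl)
  · rw [Function.onFun, Set.disjoint_left]
    rintro x (hxi | ⟨rfl, hxZ⟩) (hxj | ⟨rfl, hxZ'⟩)
    · exact Set.disjoint_left.1 (hd hij) hxi hxj
    · exact hxZ' (Set.mem_iUnion.2 ⟨i, hxi⟩)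
    · exact hxZ (Set.mem_iUnion.2 ⟨j, hxj⟩)
    · exact hij rfl
  · refine Set.eq_univ_of_forall fun x => Set.mem_iUnion.2 ?_
    by_cases hx : x ∈ Z
    · obtain ⟨j, hj⟩ := Set.mem_iUnion.1 hx
      exact ⟨j, Or.inl hj⟩
    · exact ⟨i₀, Or.inr ⟨rfl, hx⟩⟩

theorem eLpNorm_restrict_toReal_le_norm [Fact (1 ≤ pe)] (f : Lp ℂ pe μ) (s : Set α) :
    (eLpNorm f pe (μ.restrict s)).toReal ≤ ‖f‖ :=
  ENNReal.toReal_mono (Lp.eLpNorm_ne_top f) (eLpNorm_mono_measure _ Measure.restrict_le_self)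

theorem sum_eLpNorm_restrict_le_sum_norm [Fact (1 ≤ pe)] (hq : 0 < q) (g : Fin n → Lp ℂ pe μ)
    (X : Fin n → Set α) :
    (∑ i, (eLpNorm (g i) pe (μ.restrict (X i))).toReal ^ q) ^ (1 / q)
      ≤ (∑ i, ‖g i‖ ^ q) ^ (1 / q) :=
  sum_rpow_rpow_one_div_le_of_le hq (fun _ => ENNReal.toReal_nonneg)
    fun i => eLpNorm_restrict_toReal_le_norm (g i) (X i)

theorem stdQNorm_nonneg (g : Fin n → Lp ℂ pe μ) : 0 ≤ stdQNorm μ pe q g :=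
  Real.sSup_nonneg fun _ ⟨_, _, _, _, hr⟩ => hr ▸ by positivity

theorem stdQNorm_le_sum_norm [Fact (1 ≤ pe)] (hq : 0 < q) (g : Fin n → Lp ℂ pe μ) :
    stdQNorm μ pe q g ≤ (∑ i, ‖g i‖ ^ q) ^ (1 / q) :=
  Real.sSup_le (fun _ ⟨X, _, _, _, hr⟩ => hr ▸ sum_eLpNorm_restrict_le_sum_norm hq g X)
    (by positivity)

theorem sum_eLpNorm_restrict_le_stdQNorm [Fact (1 ≤ pe)] (hq : 0 < q) (g : Fin n → Lp ℂ pe μ)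
    {X : Fin n → Set α} (hX : ∀ i, MeasurableSet (X i))
    (hd : Pairwise (Function.onFun Disjoint X)) :
    (∑ i, (eLpNorm (g i) pe (μ.restrict (X i))).toReal ^ q) ^ (1 / q) ≤ stdQNorm μ pe q g := by
  rcases isEmpty_or_nonempty (Fin n) with hn | hn
  · simpa [Real.zero_rpow (inv_pos.2 hq).ne'] using stdQNorm_nonneg (q := q) g
  obtain ⟨Y, hY, hdY, hcov, hXY⟩ := exists_partition_superset hX hd
  have hbdd : BddAbove {r : ℝ | ∃ X : Fin n → Set α,
      (∀ i, MeasurableSet (X i)) ∧ Pairwise (Function.onFun Disjoint X) ∧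
      (⋃ i, X i) = Set.univ ∧
      r = (∑ i, (eLpNorm (g i) pe (μ.restrict (X i))).toReal ^ q) ^ (1 / q)} :=
    ⟨_, fun _ ⟨X, _, _, _, hr⟩ => hr ▸ sum_eLpNorm_restrict_le_sum_norm hq g X⟩
  refine le_trans ?_ (le_csSup hbdd ⟨Y, hY, hdY, hcov, rfl⟩)
  exact sum_rpow_rpow_one_div_le_of_le hq (fun _ => ENNReal.toReal_nonneg) fun i =>
    ENNReal.toReal_mono (ne_top_of_le_ne_top (Lp.eLpNorm_ne_top (g i))
      (eLpNorm_mono_measure _ Measure.restrict_le_self))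
      (eLpNorm_mono_measure _ (Measure.restrict_mono (hXY i) le_rfl))

end StdQNorm

theorem exists_enorm_rpow_mul_eq_one {y : ℝ≥0∞} (h0 : y ≠ 0) (htop : y ≠ ∞) {r : ℝ}
    (hr : 0 < r) : ∃ b : ℂ, ‖b‖ₑ ^ r * y = 1 := by
  refine ⟨((y⁻¹ ^ (1 / r)).toReal : ℂ), ?_⟩
  have hfin : y⁻¹ ^ (1 / r) ≠ ∞ :=
    ENNReal.rpow_ne_top_of_nonneg (by positivity) (ENNReal.inv_ne_top.2 h0)
  rw [← ofReal_norm, Complex.norm_real, Real.norm_of_nonneg ENNReal.toReal_nonneg,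
    ENNReal.ofReal_toReal hfin, ← ENNReal.rpow_mul, one_div_mul_cancel hr.ne', ENNReal.rpow_one,
    ENNReal.inv_mul_cancel h0 htop]

theorem sum_indicator_apply_of_mem {α ι M : Type*} [Fintype ι] [AddCommMonoid M]
    {X : ι → Set α} (hd : Pairwise (Function.onFun Disjoint X)) (b : ι → M) {k : ι} {x : α}
    (hx : x ∈ X k) :
    ∑ i, (X i).indicator (fun _ => b i) x = b k :=
  (Finset.sum_eq_single k (fun i _ hik => Set.indicator_of_notMem
      (Set.disjoint_left.1 (hd hik.symm) hx) _) (by simp)).trans (Set.indicator_of_mem hx _)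

theorem enorm_sum_indicator_rpow {α ι F : Type*} [Fintype ι] [NormedAddCommGroup F]
    {X : ι → Set α} (hd : Pairwise (Function.onFun Disjoint X)) (b : ι → F)
    {r : ℝ} (hr : 0 < r) (x : α) :
    ‖∑ i, (X i).indicator (fun _ => b i) x‖ₑ ^ r
      = ∑ i, (X i).indicator (fun _ => ‖b i‖ₑ ^ r) x := by
  by_cases hx : ∃ k, x ∈ X k
  · obtain ⟨k, hk⟩ := hx
    rw [sum_indicator_apply_of_mem hd _ hk, sum_indicator_apply_of_mem hd _ hk]
  · simp only [not_exists] at hx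
    simp [Set.indicator_of_notMem (hx _), ENNReal.zero_rpow_of_pos hr]

section DisjointSupports

variable {α : Type*} [MeasurableSpace α] {μ : Measure α} {pe : ℝ≥0∞}
  {F : Type*} [NormedAddCommGroup F] {ι : Type*} [Fintype ι] {X : ι → Set α}

theorem eLpNorm_rpow_toReal_eq_lintegral (hpe0 : pe ≠ 0) (hpe : pe ≠ ∞) (f : α → F)
    (ν : Measure α) : eLpNorm f pe ν ^ pe.toReal = ∫⁻ x, ‖f x‖ₑ ^ pe.toReal ∂ν := by
  rw [eLpNorm_eq_lintegral_rpow_enorm_toReal hpe0 hpe, ← ENNReal.rpow_mul,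
    one_div_mul_cancel (ENNReal.toReal_pos hpe0 hpe).ne', ENNReal.rpow_one]

theorem sum_eLpNorm_restrict_rpow_le (hpe0 : pe ≠ 0) (hpe : pe ≠ ∞) (f : α → F)
    (hX : ∀ i, MeasurableSet (X i)) (hd : Pairwise (Function.onFun Disjoint X)) :
    ∑ i, eLpNorm f pe (μ.restrict (X i)) ^ pe.toReal ≤ eLpNorm f pe μ ^ pe.toReal := by
  simp only [eLpNorm_rpow_toReal_eq_lintegral hpe0 hpe]
  calc ∑ i, ∫⁻ x in X i, ‖f x‖ₑ ^ pe.toReal ∂μ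
        = ∫⁻ x in ⋃ i, X i, ‖f x‖ₑ ^ pe.toReal ∂μ := by
        rw [lintegral_iUnion hX hd, tsum_fintype]
    _ ≤ ∫⁻ x, ‖f x‖ₑ ^ pe.toReal ∂μ := lintegral_mono' Measure.restrict_le_self le_rfl

theorem sum_eLpNorm_restrict_toReal_rpow_le [Fact (1 ≤ pe)] (hpe : pe ≠ ∞) (f : Lp F pe μ)
    (hX : ∀ i, MeasurableSet (X i)) (hd : Pairwise (Function.onFun Disjoint X)) :
    ∑ i, (eLpNorm f pe (μ.restrict (X i))).toReal ^ pe.toReal ≤ ‖f‖ ^ pe.toReal := by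
  have hpe0 : pe ≠ 0 := (zero_lt_one.trans_le Fact.out).ne'
  have hfin : ∀ s, eLpNorm f pe (μ.restrict s) ^ pe.toReal ≠ ∞ := fun s =>
    ENNReal.rpow_ne_top_of_nonneg ENNReal.toReal_nonneg (ne_top_of_le_ne_top
      (Lp.eLpNorm_ne_top f) (eLpNorm_mono_measure _ Measure.restrict_le_self))
  simp only [Lp.norm_def, ENNReal.toReal_rpow]
  rw [← ENNReal.toReal_sum fun i _ => hfin (X i)]
  exact ENNReal.toReal_mono
    (ENNReal.rpow_ne_top_of_nonneg ENNReal.toReal_nonneg (Lp.eLpNorm_ne_top f))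
    (sum_eLpNorm_restrict_rpow_le hpe0 hpe f hX hd)

theorem eLpNorm_sum_indicator_rpow (hpe0 : pe ≠ 0) (hpe : pe ≠ ∞)
    (hX : ∀ i, MeasurableSet (X i)) (hd : Pairwise (Function.onFun Disjoint X)) (b : ι → F)
    (ν : Measure α) :
    eLpNorm (fun x => ∑ i, (X i).indicator (fun _ => b i) x) pe ν ^ pe.toReal
      = ∑ i, ‖b i‖ₑ ^ pe.toReal * ν (X i) := by
  rw [eLpNorm_rpow_toReal_eq_lintegral hpe0 hpe]
  simp_rw [enorm_sum_indicator_rpow hd b (ENNReal.toReal_pos hpe0 hpe)]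
  rw [lintegral_finsetSum _ fun i _ => measurable_const.indicator (hX i)]
  exact Finset.sum_congr rfl fun i _ => lintegral_indicator_const (hX i) _

theorem norm_LpToLpRestrictCLM [Fact (1 ≤ pe)] (s : Set α) (f : Lp ℂ pe μ) :
    ‖LpToLpRestrictCLM α ℂ ℂ μ pe s f‖ = (eLpNorm f pe (μ.restrict s)).toReal := by
  rw [Lp.norm_def, eLpNorm_congr_ae (LpToLpRestrictCLM_coeFn ℂ s f)]

end DisjointSupports

section NormalizedIndicators

variable {α : Type*} [MeasurableSpace α] {μ : Measure α} {pe : ℝ≥0∞}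
  {ι : Type*} [Fintype ι] {X : ι → Set α} (hX : ∀ i, MeasurableSet (X i))
  (hμ : ∀ i, μ (X i) ≠ ∞) (b : ι → ℂ)
include hX hμ

theorem coeFn_sum_smul_indicatorConstLp (c : ι → ℂ) :
    ⇑(∑ i, c i • indicatorConstLp pe (hX i) (hμ i) (b i) : Lp ℂ pe μ)
      =ᵐ[μ] fun x => ∑ i, (X i).indicator (fun _ => c i * b i) x := by
  have hterm : ∀ᵐ x ∂μ, ∀ i, (c i • indicatorConstLp pe (hX i) (hμ i) (b i)) x
      = (X i).indicator (fun _ => c i * b i) x := by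
    refine ae_all_iff.2 fun i => ?_
    filter_upwards [Lp.coeFn_smul (c i) (indicatorConstLp pe (hX i) (hμ i) (b i)),
      indicatorConstLp_coeFn (p := pe) (hs := hX i) (hμs := hμ i) (c := b i)] with x h1 h2
    by_cases hx : x ∈ X i <;> simp [h1, h2, hx]
  filter_upwards [Lp.coeFn_fun_finsetSum Finset.univ
    (fun i => c i • indicatorConstLp pe (hX i) (hμ i) (b i)), hterm] with x h1 h2
  rw [h1]
  exact Finset.sum_congr rfl fun i _ => h2 i

variable [Fact (1 ≤ pe)] (hd : Pairwise (Function.onFun Disjoint X))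
  (hb : ∀ i, ‖b i‖ₑ ^ pe.toReal * μ (X i) = 1)
include hd hb

theorem eLpNorm_restrict_sum_smul_indicatorConstLp (hpe : pe ≠ ∞) (c : ι → ℂ) (k : ι) :
    eLpNorm (∑ i, c i • indicatorConstLp pe (hX i) (hμ i) (b i) : Lp ℂ pe μ) pe
      (μ.restrict (X k)) = ‖c k‖ₑ := by
  have hpe0 : pe ≠ 0 := (zero_lt_one.trans_le Fact.out).ne'
  have hp := ENNReal.toReal_pos hpe0 hpe
  have h := eLpNorm_sum_indicator_rpow hpe0 hpe hX hd (fun i => c i * b i) (μ.restrict (X k))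
  rw [Finset.sum_eq_single k (fun i _ hik => by
      rw [Measure.restrict_apply (hX i), Set.disjoint_iff_inter_eq_empty.1 (hd hik),
        measure_empty, mul_zero]) (by simp),
    Measure.restrict_apply (hX k), Set.inter_self, enorm_mul,
    ENNReal.mul_rpow_of_nonneg _ _ hp.le, mul_assoc, hb, mul_one] at h
  rw [eLpNorm_congr_ae (ae_restrict_of_ae (coeFn_sum_smul_indicatorConstLp hX hμ b c))]
  exact ENNReal.rpow_left_injective hp.ne' h

theorem norm_sum_smul_indicatorConstLp (hpe : pe ≠ ∞) (c : ι → ℂ) :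
    ‖∑ i, c i • indicatorConstLp pe (hX i) (hμ i) (b i)‖
      = (∑ i, ‖c i‖ ^ pe.toReal) ^ (1 / pe.toReal) := by
  have hpe0 : pe ≠ 0 := (zero_lt_one.trans_le Fact.out).ne'
  have hp := ENNReal.toReal_pos hpe0 hpe
  have h := eLpNorm_sum_indicator_rpow hpe0 hpe hX hd (fun i => c i * b i) μ
  simp only [enorm_mul, ENNReal.mul_rpow_of_nonneg _ _ hp.le, mul_assoc, hb, mul_one] at h
  rw [Lp.norm_def, eLpNorm_congr_ae (coeFn_sum_smul_indicatorConstLp hX hμ b c),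
    ← ENNReal.rpow_rpow_inv hp.ne' (eLpNorm _ pe μ), h, ← one_div, ← ENNReal.toReal_rpow,
    ENNReal.toReal_sum fun i _ => ENNReal.rpow_ne_top_of_nonneg hp.le enorm_ne_top]
  simp only [← ENNReal.toReal_rpow, toReal_enorm]

end NormalizedIndicators

section Lifting

variable {α : Type*} [MeasurableSpace α] {μ : Measure α} {p q : ℝ}
  [Fact (1 ≤ ENNReal.ofReal p)] {n : ℕ}

theorem exists_lift_le_stdQNorm (hq : 0 < q) {X : Fin n → Set α}
    (hX : ∀ i, MeasurableSet (X i)) (hd : Pairwise (Function.onFun Disjoint X))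
    (hμX : ∀ i, 0 < μ (X i) ∧ μ (X i) < ∞) (Φ : Fin n → StrongDual ℂ (StrongDual ℂ E))
    {lam : Fin n → StrongDual ℂ E} (hlam : muPN p lam ≤ 1) :
    ∃ T : E →L[ℂ] Lp ℂ (ENNReal.ofReal p) μ, ‖T‖ ≤ 1 ∧
      ∃ g : Fin n → Lp ℂ (ENNReal.ofReal p) μ,
        (∀ i, inclusionInDoubleDual ℂ (Lp ℂ (ENNReal.ofReal p) μ) (g i)
          = (Φ i).comp (dualOp T)) ∧
        (∑ i, ‖Φ i (lam i)‖ ^ q) ^ (1 / q) ≤ stdQNorm μ (ENNReal.ofReal p) q g := by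
  have hp : 0 < p := pos_of_one_le_ofReal p
  have hpe : ENNReal.ofReal p ≠ ∞ := ENNReal.ofReal_ne_top
  have hpp : (ENNReal.ofReal p).toReal = p := ENNReal.toReal_ofReal hp.le
  have hμ : ∀ i, μ (X i) ≠ ∞ := fun i => (hμX i).2.ne
  choose b hb using fun i => exists_enorm_rpow_mul_eq_one (r := (ENNReal.ofReal p).toReal)
    (hμX i).1.ne' (hμ i) (by rwa [hpp])
  set e : Fin n → Lp ℂ (ENNReal.ofReal p) μ := fun i => indicatorConstLp _ (hX i) (hμ i) (b i)
  refine ⟨∑ i, (lam i).smulRight (e i), ?_, fun k => ∑ i, Φ k (lam i) • e i,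
    fun k => (comp_dualOp_sum_smulRight (Φ k) lam e).symm, ?_⟩
  · refine ContinuousLinearMap.opNorm_le_of_unit_norm zero_le_one fun x hx => ?_
    simp only [FunLike.coe_sum, Finset.sum_apply, ContinuousLinearMap.smulRight_apply]
    rw [norm_sum_smul_indicatorConstLp hX hμ b hd hb hpe, hpp]
    exact (le_muPN hp lam hx.le).trans hlam
  · refine le_of_eq_of_le ?_ (sum_eLpNorm_restrict_le_stdQNorm hq _ hX hd)
    simp only [e, eLpNorm_restrict_sum_smul_indicatorConstLp hX hμ b hd hb hpe, toReal_enorm]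

theorem exists_muPN_le_one_norm_eq {T : E →L[ℂ] Lp ℂ (ENNReal.ofReal p) μ} (hT : ‖T‖ ≤ 1)
    {Φ : Fin n → StrongDual ℂ (StrongDual ℂ E)} {g : Fin n → Lp ℂ (ENNReal.ofReal p) μ}
    (hg : ∀ i, inclusionInDoubleDual ℂ (Lp ℂ (ENNReal.ofReal p) μ) (g i)
      = (Φ i).comp (dualOp T))
    {X : Fin n → Set α} (hX : ∀ i, MeasurableSet (X i))
    (hd : Pairwise (Function.onFun Disjoint X)) :
    ∃ lam : Fin n → StrongDual ℂ E, muPN p lam ≤ 1 ∧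
      ∀ i, ‖Φ i (lam i)‖ = (eLpNorm (g i) (ENNReal.ofReal p) (μ.restrict (X i))).toReal := by
  have hp : 0 < p := pos_of_one_le_ofReal p
  have hpp : (ENNReal.ofReal p).toReal = p := ENNReal.toReal_ofReal hp.le
  set R := fun i => LpToLpRestrictCLM α ℂ ℂ μ (ENNReal.ofReal p) (X i)
  choose ψ hψ hψg using fun i => exists_dual_vector'' ℂ (R i (g i))
  refine ⟨fun i => dualOp T ((ψ i).comp (R i)), muPN_le_one hp fun x hx => ?_, fun i => ?_⟩
  · have hTx : ‖T x‖ ≤ 1 := T.le_of_opNorm_le_of_le hT hx |>.trans_eq (one_mul 1)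
    calc ∑ i, ‖dualOp T ((ψ i).comp (R i)) x‖ ^ p
        ≤ ∑ i, (eLpNorm (T x) (ENNReal.ofReal p) (μ.restrict (X i))).toReal ^ p := by
          refine Finset.sum_le_sum fun i _ => Real.rpow_le_rpow (norm_nonneg _) ?_ hp.le
          rw [← norm_LpToLpRestrictCLM]
          exact (ψ i).le_of_opNorm_le_of_le (hψ i) le_rfl |>.trans_eq (one_mul _)
      _ ≤ ‖T x‖ ^ p := by
          simpa only [hpp] using
            sum_eLpNorm_restrict_toReal_rpow_le ENNReal.ofReal_ne_top (T x) hX hd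
      _ ≤ 1 := Real.rpow_le_one (norm_nonneg _) hTx hp.le
  · have hΦ : Φ i (dualOp T ((ψ i).comp (R i))) = ψ i (R i (g i)) := by
      rw [← ContinuousLinearMap.comp_apply, ← hg i, dual_def, ContinuousLinearMap.comp_apply]
    rw [hΦ, hψg i, RCLike.norm_ofReal, abs_norm, norm_LpToLpRestrictCLM]

end Lifting

section Values

variable {n : ℕ}

def pqNormValues (p q : ℝ) (Φ : Fin n → StrongDual ℂ (StrongDual ℂ E)) : Set ℝ :=
  {r : ℝ | ∃ lam : Fin n → StrongDual ℂ E, muPN p lam ≤ 1 ∧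
    r = (∑ i, ‖Φ i (lam i)‖ ^ q) ^ (1 / q)}

def liftedStdQNormValues {α : Type*} [MeasurableSpace α] (μ : Measure α) (p q : ℝ)
    [Fact (1 ≤ ENNReal.ofReal p)] (Φ : Fin n → StrongDual ℂ (StrongDual ℂ E)) : Set ℝ :=
  {r : ℝ | ∃ T : E →L[ℂ] Lp ℂ (ENNReal.ofReal p) μ, ‖T‖ ≤ 1 ∧
    ∃ g : Fin n → Lp ℂ (ENNReal.ofReal p) μ,
      (∀ i, inclusionInDoubleDual ℂ (Lp ℂ (ENNReal.ofReal p) μ) (g i)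
        = (Φ i).comp (dualOp T)) ∧
      r = stdQNorm μ (ENNReal.ofReal p) q g}

variable {p q : ℝ}

theorem bddAbove_pqNormValues (hp : 0 < p) (hq : 0 < q)
    (Φ : Fin n → StrongDual ℂ (StrongDual ℂ E)) : BddAbove (pqNormValues p q Φ) := by
  refine ⟨(∑ i, ‖Φ i‖ ^ q) ^ (1 / q), ?_⟩
  rintro _ ⟨lam, hlam, rfl⟩
  exact sum_rpow_rpow_one_div_le_of_le hq (fun _ => norm_nonneg _) fun i =>
    (Φ i).le_of_opNorm_le_of_le le_rfl ((norm_le_muPN hp lam i).trans hlam) |>.trans_eq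
      (mul_one _)

theorem bddAbove_liftedStdQNormValues {α : Type*} [MeasurableSpace α] {μ : Measure α}
    [Fact (1 ≤ ENNReal.ofReal p)] (hq : 0 < q) (Φ : Fin n → StrongDual ℂ (StrongDual ℂ E)) :
    BddAbove (liftedStdQNormValues μ p q Φ) := by
  refine ⟨(∑ i, ‖Φ i‖ ^ q) ^ (1 / q), ?_⟩
  rintro _ ⟨T, hT, g, hg, rfl⟩
  exact (stdQNorm_le_sum_norm hq g).trans (sum_rpow_rpow_one_div_le_of_le hq
    (fun _ => norm_nonneg _) fun i => norm_le_of_inclusionInDoubleDual_eq_comp_dualOp hT (hg i))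

end Values

theorem bidual_pq_multinorm_via_standard_q_multinorm_general
    {α : Type*} [MeasurableSpace α] (μ : Measure α)
    (p q : ℝ) (hpq : p ≤ q) [Fact (1 ≤ ENNReal.ofReal p)]
    (hdim : ∀ m : ℕ, ∃ X : Fin m → Set α, (∀ i, MeasurableSet (X i)) ∧
      Pairwise (Function.onFun Disjoint X) ∧ ∀ i, 0 < μ (X i) ∧ μ (X i) < ∞)
    (n : ℕ) (Φ : Fin n → StrongDual ℂ (StrongDual ℂ E)) :
    sSup {r : ℝ | ∃ lam : Fin n → StrongDual ℂ E, muPN p lam ≤ 1 ∧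
        r = (∑ i, ‖Φ i (lam i)‖ ^ q) ^ (1 / q)}
      = sSup {r : ℝ | ∃ T : E →L[ℂ] Lp ℂ (ENNReal.ofReal p) μ, ‖T‖ ≤ 1 ∧
          ∃ g : Fin n → Lp ℂ (ENNReal.ofReal p) μ,
            (∀ i, inclusionInDoubleDual ℂ (Lp ℂ (ENNReal.ofReal p) μ) (g i)
              = (Φ i).comp (dualOp T)) ∧
            r = stdQNorm μ (ENNReal.ofReal p) q g} := by
  have hp : 0 < p := pos_of_one_le_ofReal p
  have hq : 0 < q := hp.trans_le hpq
  have hpq_nonneg : ∀ r ∈ pqNormValues p q Φ, 0 ≤ r := fun _ ⟨_, _, hr⟩ => hr ▸ by positivity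
  have hstd_nonneg : ∀ r ∈ liftedStdQNormValues μ p q Φ, 0 ≤ r :=
    fun _ ⟨_, _, g, _, hr⟩ => hr ▸ stdQNorm_nonneg g
  change sSup (pqNormValues p q Φ) = sSup (liftedStdQNormValues μ p q Φ)
  refine le_antisymm (Real.sSup_le ?_ (Real.sSup_nonneg hstd_nonneg))
    (Real.sSup_le ?_ (Real.sSup_nonneg hpq_nonneg))
  · rintro _ ⟨lam, hlam, rfl⟩
    obtain ⟨X, hX, hd, hμX⟩ := hdim n
    obtain ⟨T, hT, g, hg, hle⟩ := exists_lift_le_stdQNorm hq hX hd hμX Φ hlam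
    exact hle.trans (le_csSup (bddAbove_liftedStdQNormValues hq Φ) ⟨T, hT, g, hg, rfl⟩)
  · rintro _ ⟨T, hT, g, hg, rfl⟩
    refine Real.sSup_le ?_ (Real.sSup_nonneg hpq_nonneg)
    rintro _ ⟨X, hX, hd, -, rfl⟩
    obtain ⟨lam, hlam, hnorm⟩ := exists_muPN_le_one_norm_eq hT hg hX hd
    exact le_csSup (bddAbove_pqNormValues hp hq Φ) ⟨lam, hlam, by simp only [hnorm]⟩

/-- for a complex Banach space `E`, `1 < p ≤ q < ∞`, and a measure space
`(Ω,μ)` with `L^p(Ω)` infinite-dimensional, the `(p,q)`-multi-norm of a tuple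
`(Φ₁,…,Φₙ)` in the bidual `E''` equals the supremum over `T ∈ B(E, L^p(Ω))_{[1]}` of the
standard `q`-multi-norm of `(j⁻¹(T''Φ₁),…,j⁻¹(T''Φₙ))`, where `j` is the canonical
embedding of `L^p(Ω)` into its bidual (an isomorphism by reflexivity). -/
theorem bidual_pq_multinorm_via_standard_q_multinorm
    [CompleteSpace E]
    {α : Type*} [MeasurableSpace α] (μ : Measure α)
    (p q : ℝ) (hp : 1 < p) (hpq : p ≤ q) [Fact (1 ≤ ENNReal.ofReal p)]
    (hdim : ∀ m : ℕ, ∃ X : Fin m → Set α, (∀ i, MeasurableSet (X i)) ∧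
      Pairwise (Function.onFun Disjoint X) ∧ ∀ i, 0 < μ (X i) ∧ μ (X i) < ∞)
    (n : ℕ) (hn : 0 < n) (Φ : Fin n → StrongDual ℂ (StrongDual ℂ E)) :
    sSup {r : ℝ | ∃ lam : Fin n → StrongDual ℂ E, muPN p lam ≤ 1 ∧
        r = (∑ i, ‖Φ i (lam i)‖ ^ q) ^ (1 / q)}
      = sSup {r : ℝ | ∃ T : E →L[ℂ] Lp ℂ (ENNReal.ofReal p) μ, ‖T‖ ≤ 1 ∧
          ∃ g : Fin n → Lp ℂ (ENNReal.ofReal p) μ,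
            (∀ i, inclusionInDoubleDual ℂ (Lp ℂ (ENNReal.ofReal p) μ) (g i)
              = (Φ i).comp (dualOp T)) ∧
            r = stdQNorm μ (ENNReal.ofReal p) q g} :=
  bidual_pq_multinorm_via_standard_q_multinorm_general μ p q hpq hdim n Φ
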